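/- Lipschitz continuity of the von Neumann entropy on matrices: for any x, y ∈ Matrix (Fin n) (Fin n) ℂ, setting t = max(‖x‖, ‖y‖, 1), one has |H(|x|²) − H(|y|²)| ≤ (4 t * Real.log t + 2 t) * n * ‖x − y‖. -/

import Mathlib

/-!
The entropy is `-∑ σᵢ² log σᵢ²` over the singular values `σᵢ` of `x`, listed in decreasing
order. Weyl's perturbation inequality `|σₖ(x) - σₖ(y)| ≤ ‖x - y‖` follows from the min-max
characterisation: a `(k+1)`-dimensional space on which `‖x u‖ ≥ σₖ(x) ‖u‖` meets an
`(n-k)`-dimensional space on which `‖y u‖ ≤ σₖ(y) ‖u‖`. All `σᵢ` lie in `[0, t]`, where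
`s ↦ s² log s²` has derivative `4 s log s + 2 s`, of absolute value at most `4 t log t + 2 t`;
summing the `n` mean-value estimates gives the bound.
-/

open Finset

/-- The `ℓ² → ℓ²` operator norm of a matrix, via its action on Euclidean space. -/
noncomputable def matOpNorm {n : ℕ} (A : Matrix (Fin n) (Fin n) ℂ) : ℝ :=
  ‖Matrix.toEuclideanCLM (𝕜 := ℂ) A‖

/-- The von Neumann entropy of `|x|²`, i.e. `-∑ μ i * log (μ i)` where `μ` are the
eigenvalues of the Hermitian matrix `xᴴ * x` (with multiplicity); since
`Real.log 0 = 0`, the convention `0 * log 0 = 0` holds automatically. -/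
noncomputable def vnEnt {n : ℕ} (x : Matrix (Fin n) (Fin n) ℂ) : ℝ :=
  -∑ i, (Matrix.isHermitian_conjTranspose_mul_self x).eigenvalues i *
      Real.log ((Matrix.isHermitian_conjTranspose_mul_self x).eigenvalues i)

open Module InnerProductSpace Real
open scoped Matrix

theorem Module.Basis.exists_ne_zero_repr_eq_zero_of_gt_of_lt {K V : Type*} [DivisionRing K]
    [AddCommGroup V] [Module K V] {n : ℕ} (b b' : Basis (Fin n) K V) (k : Fin n) :
    ∃ u ≠ 0, (∀ i, k < i → b.repr u i = 0) ∧ ∀ i, i < k → b'.repr u i = 0 := by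
  have : FiniteDimensional K V := b.finiteDimensional_of_finite
  let f : V →ₗ[K] (Finset.Ioi k → K) × (Finset.Iio k → K) :=
    .prod (.pi fun i ↦ b.coord i) (.pi fun i ↦ b'.coord i)
  have hdim : finrank K ((Finset.Ioi k → K) × (Finset.Iio k → K)) < finrank K V := by
    simp only [finrank_prod, finrank_fintype_fun_eq_card, Fintype.card_coe, Fin.card_Ioi,
      Fin.card_Iio, finrank_eq_card_basis b, Fintype.card_fin]
    omega
  obtain ⟨u, hu, hu0⟩ :=
    Submodule.exists_mem_ne_zero_of_ne_bot (LinearMap.ker_ne_bot_of_finrank_lt (f := f) hdim)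
  refine ⟨u, hu0, fun i hi ↦ ?_, fun i hi ↦ ?_⟩
  · simpa [f] using congr_fun (congr_arg Prod.fst hu) ⟨i, Finset.mem_Ioi.2 hi⟩
  · simpa [f] using congr_fun (congr_arg Prod.snd hu) ⟨i, Finset.mem_Iio.2 hi⟩

namespace LinearMap

variable {𝕜 E F : Type*} [RCLike 𝕜]
  [NormedAddCommGroup E] [InnerProductSpace 𝕜 E] [FiniteDimensional 𝕜 E]
  [NormedAddCommGroup F] [InnerProductSpace 𝕜 F] [FiniteDimensional 𝕜 F]
  {n : ℕ} (T : E →ₗ[𝕜] F) (hn : finrank 𝕜 E = n)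

noncomputable def rightSingularBasis : OrthonormalBasis (Fin n) 𝕜 E :=
  T.isSymmetric_adjoint_comp_self.eigenvectorBasis hn

theorem norm_apply_sq_eq_sum_singularValues (u : E) :
    ‖T u‖ ^ 2 = ∑ i : Fin n, T.singularValues i ^ 2 * ‖(T.rightSingularBasis hn).repr u i‖ ^ 2 := by
  have h : ⟪T u, T u⟫_𝕜 = ∑ i : Fin n,
      ((T.singularValues i ^ 2 : ℝ) : 𝕜) * ‖(T.rightSingularBasis hn).repr u i‖ ^ 2 := by
    rw [← adjoint_inner_right, ← comp_apply, ← (T.rightSingularBasis hn).repr.inner_map_map,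
      PiLp.inner_apply]
    refine Finset.sum_congr rfl fun i _ ↦ ?_
    rw [rightSingularBasis, T.isSymmetric_adjoint_comp_self.eigenvectorBasis_apply_self_apply,
      T.sq_singularValues_fin hn, RCLike.inner_apply, mul_assoc, RCLike.mul_conj]
  exact_mod_cast (inner_self_eq_norm_sq_to_K (T u)).symm.trans h

variable {T hn}

theorem singularValues_mul_norm_le_norm_apply {u : E} {k : Fin n}
    (hu : ∀ i, k < i → (T.rightSingularBasis hn).repr u i = 0) :
    T.singularValues k * ‖u‖ ≤ ‖T u‖ := by
  have hσ := T.singularValues_nonneg k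
  rw [← pow_le_pow_iff_left₀ (by positivity) (norm_nonneg _) two_ne_zero, mul_pow,
    ← (T.rightSingularBasis hn).repr.norm_map, EuclideanSpace.norm_sq_eq, Finset.mul_sum,
    T.norm_apply_sq_eq_sum_singularValues hn]
  refine Finset.sum_le_sum fun i _ ↦ ?_
  rcases le_or_gt i k with hik | hki
  · gcongr
    exact T.singularValues_antitone hik
  · simp [hu i hki]

theorem norm_apply_le_singularValues_mul_norm {u : E} {k : Fin n}
    (hu : ∀ i, i < k → (T.rightSingularBasis hn).repr u i = 0) :
    ‖T u‖ ≤ T.singularValues k * ‖u‖ := by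
  have hσ := T.singularValues_nonneg k
  rw [← pow_le_pow_iff_left₀ (norm_nonneg _) (by positivity) two_ne_zero, mul_pow,
    ← (T.rightSingularBasis hn).repr.norm_map, EuclideanSpace.norm_sq_eq, Finset.mul_sum,
    T.norm_apply_sq_eq_sum_singularValues hn]
  refine Finset.sum_le_sum fun i _ ↦ ?_
  rcases lt_or_ge i k with hik | hki
  · simp [hu i hik]
  · gcongr
    · exact T.singularValues_nonneg i
    · exact T.singularValues_antitone hki

end LinearMap

namespace ContinuousLinearMap

variable {𝕜 E F : Type*} [RCLike 𝕜]
  [NormedAddCommGroup E] [InnerProductSpace 𝕜 E] [FiniteDimensional 𝕜 E]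
  [NormedAddCommGroup F] [InnerProductSpace 𝕜 F] [FiniteDimensional 𝕜 F]
  (T S : E →L[𝕜] F)

theorem singularValues_le_add_norm_sub (k : ℕ) :
    (T : E →ₗ[𝕜] F).singularValues k ≤ (S : E →ₗ[𝕜] F).singularValues k + ‖T - S‖ := by
  rcases lt_or_ge k (finrank 𝕜 E) with hk | hk
  · obtain ⟨u, hu0, hTu, hSu⟩ := Basis.exists_ne_zero_repr_eq_zero_of_gt_of_lt
      ((T : E →ₗ[𝕜] F).rightSingularBasis rfl).toBasis
      ((S : E →ₗ[𝕜] F).rightSingularBasis rfl).toBasis ⟨k, hk⟩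
    simp only [OrthonormalBasis.coe_toBasis_repr_apply] at hTu hSu
    refine le_of_mul_le_mul_right ?_ (norm_pos_iff.2 hu0)
    calc (T : E →ₗ[𝕜] F).singularValues k * ‖u‖ ≤ ‖T u‖ :=
          LinearMap.singularValues_mul_norm_le_norm_apply hTu
      _ ≤ ‖S u‖ + ‖(T - S) u‖ := norm_le_norm_add_norm_sub' _ _
      _ ≤ (S : E →ₗ[𝕜] F).singularValues k * ‖u‖ + ‖T - S‖ * ‖u‖ :=
          add_le_add (LinearMap.norm_apply_le_singularValues_mul_norm hSu) ((T - S).le_opNorm u)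
      _ = _ := by ring
  · simp [LinearMap.singularValues_of_finrank_le _ hk]

theorem abs_singularValues_sub_le_norm_sub (k : ℕ) :
    |(T : E →ₗ[𝕜] F).singularValues k - (S : E →ₗ[𝕜] F).singularValues k| ≤ ‖T - S‖ :=
  abs_sub_le_iff.2 ⟨by linarith [T.singularValues_le_add_norm_sub S k],
    by linarith [S.singularValues_le_add_norm_sub T k, norm_sub_rev T S]⟩

theorem singularValues_le_norm (k : ℕ) : (T : E →ₗ[𝕜] F).singularValues k ≤ ‖T‖ := by
  simpa using T.singularValues_le_add_norm_sub 0 k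

end ContinuousLinearMap

theorem Matrix.eigenvalues₀_conjTranspose_mul_self {m : Type*} [Fintype m] [DecidableEq m]
    (x : Matrix m m ℂ) (j : Fin (Fintype.card m)) :
    (isHermitian_conjTranspose_mul_self x).eigenvalues₀ j =
      x.toEuclideanLin.singularValues j ^ 2 := by
  have hxx : (xᴴ * x).toEuclideanLin = x.toEuclideanLin.adjoint ∘ₗ x.toEuclideanLin := by
    rw [Matrix.toLpLin_mul_same, Matrix.toEuclideanLin_conjTranspose_eq_adjoint]
  rw [x.toEuclideanLin.sq_singularValues_fin finrank_euclideanSpace j, IsHermitian.eigenvalues₀]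
  -- both sides are eigenvalues of the same operator, by `hxx`
  congr!

theorem vnEnt_eq_neg_sum_singularValues {n : ℕ} (x : Matrix (Fin n) (Fin n) ℂ) :
    vnEnt x = -∑ i : Fin n, x.toEuclideanLin.singularValues i ^ 2 *
      log (x.toEuclideanLin.singularValues i ^ 2) := by
  set hx := Matrix.isHermitian_conjTranspose_mul_self x
  rw [vnEnt, neg_inj]
  simp only [Matrix.IsHermitian.eigenvalues]
  rw [Equiv.sum_comp _ fun j ↦ hx.eigenvalues₀ j * log (hx.eigenvalues₀ j)]
  simp only [Matrix.eigenvalues₀_conjTranspose_mul_self]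
  exact Fintype.sum_equiv (finCongr (Fintype.card_fin n)) _ _ fun _ ↦ rfl

namespace Real

theorem neg_exp_neg_one_le_mul_log {s : ℝ} (hs : 0 ≤ s) : -exp (-1) ≤ s * log s := by
  rcases hs.eq_or_lt with rfl | hs
  · simpa using (exp_pos _).le
  · have := mul_exp_neg_le_exp_neg_one (-log s)
    rw [neg_neg, exp_log hs] at this
    linarith

theorem hasDerivAt_sq_mul_log_sq {s : ℝ} (hs : s ≠ 0) :
    HasDerivAt (fun s ↦ s ^ 2 * log (s ^ 2)) (4 * s * log s + 2 * s) s := by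
  have hsq := hasDerivAt_pow 2 s
  refine (hsq.mul (hsq.log (pow_ne_zero 2 hs))).congr_deriv ?_
  rw [log_pow]
  field_simp
  push_cast
  ring

theorem abs_four_mul_mul_log_add_two_mul_le {s t : ℝ} (hs : 0 ≤ s) (hst : s ≤ t) (ht : 1 ≤ t) :
    |4 * s * log s + 2 * s| ≤ 4 * t * log t + 2 * t := by
  have hmono : s * log s ≤ t * log t := by
    rcases le_total s 1 with hs1 | hs1
    · exact (mul_log_nonpos hs hs1).trans (mul_log_nonneg ht)
    · exact mul_le_mul hst (log_le_log (by linarith) hst) (log_nonneg hs1) (by linarith)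
  have hlower := neg_exp_neg_one_le_mul_log hs
  have hexp : exp (-1) < 1 / 2 := by
    rw [exp_neg, one_div]
    exact inv_strictAnti₀ two_pos exp_one_gt_two
  have := mul_log_nonneg ht
  rw [abs_le]
  constructor <;> linarith

theorem abs_sq_mul_log_sq_sub_le {a b t : ℝ} (ht : 1 ≤ t) (ha : a ∈ Set.Icc 0 t)
    (hb : b ∈ Set.Icc 0 t) :
    |a ^ 2 * log (a ^ 2) - b ^ 2 * log (b ^ 2)| ≤ (4 * t * log t + 2 * t) * |a - b| := by
  wlog hab : b < a generalizing a b
  · rcases (not_lt.1 hab).eq_or_lt with rfl | hba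
    · simp
    · rw [abs_sub_comm, abs_sub_comm a]
      exact this hb ha hba
  obtain ⟨c, hc, hslope⟩ := exists_hasDerivAt_eq_slope (fun s ↦ s ^ 2 * log (s ^ 2))
    (fun s ↦ 4 * s * log s + 2 * s) hab
    (continuous_mul_log.comp (continuous_pow 2)).continuousOn
    fun c hc ↦ hasDerivAt_sq_mul_log_sq (hb.1.trans_lt hc.1).ne'
  rw [eq_div_iff (sub_ne_zero.2 hab.ne')] at hslope
  rw [← hslope, abs_mul]
  gcongr
  exact abs_four_mul_mul_log_add_two_mul_le (hb.1.trans hc.1.le) (hc.2.le.trans ha.2) ht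

end Real

theorem vnEnt_lipschitz_general {n : ℕ}
    (x y : Matrix (Fin n) (Fin n) ℂ) (t : ℝ)
    (ht : t = max (max (matOpNorm x) (matOpNorm y)) 1) :
    |vnEnt x - vnEnt y| ≤ (4 * t * Real.log t + 2 * t) * n * matOpNorm (x - y) := by
  set X := Matrix.toEuclideanCLM (𝕜 := ℂ) x
  set Y := Matrix.toEuclideanCLM (𝕜 := ℂ) y
  have ht1 : 1 ≤ t := ht ▸ le_max_right _ _
  have hXt : ‖X‖ ≤ t := ht ▸ le_max_of_le_left (le_max_left _ _)
  have hYt : ‖Y‖ ≤ t := ht ▸ le_max_of_le_left (le_max_right _ _)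
  have hL : 0 ≤ 4 * t * log t + 2 * t := by have := log_nonneg ht1; positivity
  have hδ : matOpNorm (x - y) = ‖X - Y‖ := by rw [matOpNorm, map_sub]
  rw [vnEnt_eq_neg_sum_singularValues, vnEnt_eq_neg_sum_singularValues, neg_sub_neg,
    ← Finset.sum_sub_distrib]
  calc _ ≤ ∑ i : Fin n, (4 * t * log t + 2 * t) * matOpNorm (x - y) := by
        refine (Finset.abs_sum_le_sum_abs _ _).trans (Finset.sum_le_sum fun i _ ↦ ?_)
        rw [abs_sub_comm, hδ]
        refine (abs_sq_mul_log_sq_sub_le ht1 ?_ ?_).trans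
          (mul_le_mul_of_nonneg_left (X.abs_singularValues_sub_le_norm_sub Y i) hL)
        · exact ⟨LinearMap.singularValues_nonneg _ _, (X.singularValues_le_norm i).trans hXt⟩
        · exact ⟨LinearMap.singularValues_nonneg _ _, (Y.singularValues_le_norm i).trans hYt⟩
    _ = _ := by rw [Finset.sum_const, Finset.card_univ, Fintype.card_fin, nsmul_eq_mul]; ring

/-- Lipschitz continuity of the von Neumann entropy on matrices. -/
theorem vnEnt_lipschitz {n : ℕ} (hn : 0 < n)
    (x y : Matrix (Fin n) (Fin n) ℂ) (t : ℝ)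
    (ht : t = max (max (matOpNorm x) (matOpNorm y)) 1) :
    |vnEnt x - vnEnt y| ≤ (4 * t * Real.log t + 2 * t) * n * matOpNorm (x - y) :=
  vnEnt_lipschitz_general x y t ht
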